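/- Fix a real number λ and a nonnegative integer r. In the ring ℝ[[t]] of formal power series, the power series e_λ(t) + 1 has constant term 2, hence is invertible, and the degenerate Euler numbers at r, defined by 2·(e_λ(t) + 1)⁻¹ · e_λ^r(t) = Σ_{n≥0} 𝓔_{n,λ}(r) t^n/n!, satisfy 𝓔_{n,λ}(r) = Σ_{k=0}^{n} (−1/2)^k · k! · {n+r, k+r}_{r,λ} for every n ≥ 0. -/

import Mathlib

/-! Write `e_λ(t) = 1 + u` with `u(0) = 0`, so that `2 (e_λ(t) + 1)⁻¹ = (1 + u/2)⁻¹ = ∑ₖ (-1/2)ᵏ uᵏ`.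
It remains to see that `n!` times the `n`-th coefficient of `uᵏ e_λ^r(t)` is `k! {n+r, k+r}_{r,λ}`.
For natural `m`, `e_λ^{m+r}(t) = (1 + u)^m e_λ^r(t) = ∑ₖ C(m,k) uᵏ e_λ^r(t)`, while
`(m+r)_{n,λ} = ∑ₖ k! {n+r, k+r}_{r,λ} C(m,k)`; since the matrix `(C(m,k))_{m,k ≤ n}` is
unitriangular, comparing both expansions at `m = 0, …, n` identifies the coefficients. -/

open Finset PowerSeries

/-- The degenerate falling factorial `(y)_{n,λ} = y(y-λ)(y-2λ)⋯(y-(n-1)λ)`. -/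
noncomputable def degFall (lam y : ℝ) (n : ℕ) : ℝ := ∏ i ∈ Finset.range n, (y - i * lam)

/-- The degenerate exponential `e_λ^y(t) = ∑_{n≥0} (y)_{n,λ} tⁿ/n!` as a formal power series. -/
noncomputable def degExp (lam y : ℝ) : PowerSeries ℝ :=
  PowerSeries.mk fun n => degFall lam y n / (Nat.factorial n : ℝ)

open scoped Nat

lemma degFall_succ (lam y : ℝ) (n : ℕ) :
    degFall lam y (n + 1) = degFall lam y n * (y - n * lam) :=
  prod_range_succ _ n

lemma degFall_one_natCast (m k : ℕ) : degFall 1 m k = m.descFactorial k := by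
  simp only [degFall, mul_one, ← descPochhammer_eval_eq_prod_range,
    descPochhammer_eval_eq_descFactorial]

lemma degFall_add (lam a b : ℝ) (n : ℕ) :
    degFall lam (a + b) n = ∑ ij ∈ antidiagonal n,
      (n.choose ij.1 : ℝ) * (degFall lam a ij.1 * degFall lam b ij.2) := by
  induction n with
  | zero => simp [degFall]
  | succ n ih =>
    rw [degFall_succ, ih, sum_mul,
      sum_antidiagonal_choose_succ_mul (fun i j => degFall lam a i * degFall lam b j),
      ← sum_add_distrib]
    refine sum_congr rfl fun ij hij => ?_
    obtain rfl := mem_antidiagonal.mp hij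
    rw [← Nat.choose_symm_add, degFall_succ, degFall_succ]
    push_cast
    ring

lemma coeff_degExp (lam y : ℝ) (n : ℕ) :
    coeff n (degExp lam y) = degFall lam y n / n ! :=
  coeff_mk _ _

lemma factorial_mul_coeff_degExp (lam y : ℝ) (n : ℕ) :
    n ! * coeff n (degExp lam y) = degFall lam y n := by
  rw [coeff_degExp]
  field_simp

lemma constantCoeff_degExp (lam y : ℝ) : constantCoeff (degExp lam y) = 1 := by
  simp [← coeff_zero_eq_constantCoeff_apply, coeff_degExp, degFall]

lemma degExp_add (lam a b : ℝ) : degExp lam (a + b) = degExp lam a * degExp lam b := by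
  ext n
  rw [coeff_degExp, degFall_add, sum_div, coeff_mul]
  refine sum_congr rfl fun ij hij => ?_
  obtain rfl := mem_antidiagonal.mp hij
  rw [coeff_degExp, coeff_degExp, Nat.cast_add_choose]
  field_simp

lemma degExp_natCast_add (lam r : ℝ) (m : ℕ) :
    degExp lam (m + r) = degExp lam 1 ^ m * degExp lam r := by
  induction m with
  | zero => simp
  | succ m ih => rw [Nat.cast_succ, add_comm (m : ℝ), add_assoc, degExp_add, ih, pow_succ']; ring

lemma eq_zero_of_sum_mul_choose_eq_zero {R : Type*} [Semiring R] {n : ℕ} {A : ℕ → R}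
    (h : ∀ m ≤ n, ∑ k ∈ range (n + 1), A k * m.choose k = 0) : ∀ k ≤ n, A k = 0 := by
  intro k
  induction k using Nat.strong_induction_on with
  | _ k ih =>
    intro hk
    rw [← h k hk, sum_eq_single k (fun j _ hjk => ?_) (by simp; omega)]
    · simp
    · rcases lt_or_gt_of_ne hjk with hjk | hjk
      · rw [ih j hjk (by omega), zero_mul]
      · rw [Nat.choose_eq_zero_of_lt hjk, Nat.cast_zero, mul_zero]

namespace PowerSeries

variable {R : Type*} [CommSemiring R]

lemma coeff_pow_mul_eq_zero {u : R⟦X⟧} (hu : constantCoeff u = 0) (g : R⟦X⟧) {n k : ℕ}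
    (hnk : n < k) : coeff n (u ^ k * g) = 0 :=
  X_pow_dvd_iff.mp ((pow_dvd_pow_of_dvd (X_dvd_iff.mpr hu) k).mul_right g) n hnk

lemma coeff_one_add_pow_mul {u : R⟦X⟧} (hu : constantCoeff u = 0) (g : R⟦X⟧) (m n : ℕ) :
    coeff n ((1 + u) ^ m * g) = ∑ k ∈ range (n + 1), (m.choose k : R) * coeff n (u ^ k * g) := by
  have hsub {a b : ℕ} (hab : a ≤ b) : range (a + 1) ⊆ range (b + 1) := by simpa using hab
  calc coeff n ((1 + u) ^ m * g)
      = ∑ k ∈ range (m + 1), (m.choose k : R) * coeff n (u ^ k * g) := by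
        rw [add_comm 1 u, add_pow, sum_mul, map_sum]
        refine sum_congr rfl fun k _ => ?_
        rw [one_pow, mul_one, mul_right_comm, mul_comm, ← map_natCast (C (R := R)), coeff_C_mul]
    _ = ∑ k ∈ range (m + n + 1), (m.choose k : R) * coeff n (u ^ k * g) :=
        sum_subset (hsub (by omega)) fun k _ hk => by
          rw [Nat.choose_eq_zero_of_lt (by simp at hk; omega), Nat.cast_zero, zero_mul]
    _ = _ :=
        (sum_subset (hsub (by omega)) fun k _ hk => by
          rw [coeff_pow_mul_eq_zero hu g (by simp at hk; omega), mul_zero]).symm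

lemma coeff_inv_one_sub_mul {K : Type*} [Field K] {u : K⟦X⟧} (hu : constantCoeff u = 0)
    (g : K⟦X⟧) (n : ℕ) :
    coeff n ((1 - u)⁻¹ * g) = ∑ k ∈ range (n + 1), coeff n (u ^ k * g) := by
  have hinv : (1 - u)⁻¹ * (1 - u) = 1 :=
    PowerSeries.inv_mul_cancel _ (by simp [hu])
  have hsplit : (1 - u)⁻¹ * g
      = ∑ k ∈ range (n + 1), u ^ k * g + u ^ (n + 1) * ((1 - u)⁻¹ * g) := by
    calc (1 - u)⁻¹ * g = (1 - u)⁻¹ * ((1 - u) * ∑ k ∈ range (n + 1), u ^ k + u ^ (n + 1)) * g := by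
          rw [mul_neg_geom_sum, sub_add_cancel, mul_one]
      _ = _ := by rw [← sum_mul, mul_add, ← mul_assoc, hinv]; ring
  rw [hsplit, map_add, coeff_pow_mul_eq_zero hu _ n.lt_succ_self, add_zero, map_sum]

lemma two_mul_inv_add_one {K : Type*} [Field K] [NeZero (2 : K)] {f : K⟦X⟧}
    (hf : constantCoeff f = 1) : 2 * (f + 1)⁻¹ = (1 - C (-1 / 2 : K) * (f - 1))⁻¹ := by
  rw [eq_inv_iff_mul_eq_one (by simp [hf])]
  have hunit : (f + 1)⁻¹ * (f + 1) = 1 :=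
    PowerSeries.inv_mul_cancel _ (by simp [hf, one_add_one_eq_two, NeZero.ne])
  have hhalf : (2 : K⟦X⟧) * C (1 / 2) = 1 := by
    rw [← map_ofNat C 2, ← map_mul, mul_one_div_cancel (NeZero.ne 2), map_one]
  have hneg : C (-1 / 2 : K) = -C (1 / 2) := by rw [← map_neg, neg_div]
  rw [hneg]
  linear_combination hunit + ((f + 1)⁻¹ * (f - 1)) * hhalf

end PowerSeries

lemma factorial_mul_coeff_degExp_sub_one_pow_mul (lam r : ℝ) {n : ℕ} {S : ℕ → ℝ}
    (hS : ∀ m : ℕ, degFall lam (m + r) n = ∑ k ∈ range (n + 1), S k * degFall 1 m k)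
    {k : ℕ} (hk : k ≤ n) :
    n ! * coeff n ((degExp lam 1 - 1) ^ k * degExp lam r) = k ! * S k := by
  set u := degExp lam 1 - 1
  have hu : constantCoeff u = 0 := by simp [u, constantCoeff_degExp]
  refine sub_eq_zero.mp <| eq_zero_of_sum_mul_choose_eq_zero
    (A := fun j => n ! * coeff n (u ^ j * degExp lam r) - j ! * S j) (fun m _ => ?_) k hk
  have hm : n ! * coeff n ((1 + u) ^ m * degExp lam r) = degFall lam (m + r) n := by
    rw [add_sub_cancel, ← degExp_natCast_add, factorial_mul_coeff_degExp]
  rw [coeff_one_add_pow_mul hu, hS, mul_sum, ← sub_eq_zero, ← sum_sub_distrib] at hm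
  rw [← hm]
  refine sum_congr rfl fun j _ => ?_
  rw [degFall_one_natCast, Nat.descFactorial_eq_factorial_mul_choose]
  push_cast
  ring

/-- In `ℝ⟦t⟧`, the series `e_λ(t) + 1` has constant term `2` (hence is a unit), and the
degenerate Euler numbers at `r`, defined by
`2(e_λ(t)+1)⁻¹ e_λ^r(t) = ∑_{n≥0} 𝓔_{n,λ}(r) tⁿ/n!`, satisfy
`𝓔_{n,λ}(r) = ∑_{k=0}^{n} (−1/2)^k k! {n+r,k+r}_{r,λ}`. -/
theorem degenerate_euler_generating (lam : ℝ) (r : ℕ) (S2 : ℕ → ℕ → ℝ)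
    (hS2 : ∀ (n : ℕ) (y : ℝ),
      degFall lam (y + r) n = ∑ k ∈ range (n + 1), S2 n k * degFall 1 y k)
    (E : ℕ → ℝ)
    (hE : 2 * (degExp lam 1 + 1)⁻¹ * degExp lam r
      = PowerSeries.mk fun n => E n / (Nat.factorial n : ℝ)) :
    constantCoeff (degExp lam 1 + 1) = 2 ∧
    ∀ n : ℕ, E n = ∑ k ∈ range (n + 1),
      (-1 / 2 : ℝ) ^ k * (Nat.factorial k : ℝ) * S2 n k := by
  refine ⟨by rw [map_add, constantCoeff_degExp]; norm_num, fun n => ?_⟩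
  have hu : constantCoeff (C (-1 / 2 : ℝ) * (degExp lam 1 - 1)) = 0 := by
    simp [constantCoeff_degExp]
  have hcoeff := congrArg (coeff n) hE
  rw [coeff_mk, two_mul_inv_add_one (constantCoeff_degExp lam 1), coeff_inv_one_sub_mul hu,
    eq_div_iff (by positivity)] at hcoeff
  rw [← hcoeff, sum_mul]
  refine sum_congr rfl fun k hk => ?_
  have hstirling := factorial_mul_coeff_degExp_sub_one_pow_mul lam r (fun m => hS2 n m)
    (Nat.lt_succ_iff.mp (mem_range.mp hk))
  rw [mul_pow, ← map_pow, mul_assoc, coeff_C_mul]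
  linear_combination (-1 / 2 : ℝ) ^ k * hstirling
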